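/- arXiv:2103.09209 — 6 statements merged into one kernel-verified Lean document; each statement's English description precedes it below -/
import Mathlib

section
/- A sequence (b_n) of complex numbers satisfies: the map f ↦ Σ_n a_n b_n z^n sends HL_1 boundedly into functions bounded on the closed unit disc (with supremum over the closed disc finite for each f in HL_1) if and only if sup_n (n+1)|b_n| < ∞. In particular, sup_{|z|≤1} |Σ_n a_n b_n z^n| ≤ ‖f‖_{HL_1} · sup_n (n+1)|b_n|. -/
section RCLike

variable {𝕜 : Type*} [RCLike 𝕜]

theorem norm_tsum_mul_mul_pow_le {a b : ℕ → 𝕜} {M : ℝ}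
    (hb : ∀ n : ℕ, ((n : ℝ) + 1) * ‖b n‖ ≤ M)
    (ha : Summable fun n : ℕ => ‖a n‖ / ((n : ℝ) + 1)) {z : 𝕜} (hz : ‖z‖ ≤ 1) :
    ‖∑' n : ℕ, a n * b n * z ^ n‖ ≤ (∑' n : ℕ, ‖a n‖ / ((n : ℝ) + 1)) * M := by
  refine tsum_of_norm_bounded (ha.hasSum.mul_right M) fun n => ?_
  calc ‖a n * b n * z ^ n‖ = ‖a n‖ * ‖b n‖ * ‖z‖ ^ n := by rw [norm_mul, norm_mul, norm_pow]
    _ ≤ ‖a n‖ * ‖b n‖ := mul_le_of_le_one_right (by positivity) (pow_le_one₀ (norm_nonneg z) hz)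
    _ = ‖a n‖ / (n + 1) * ((n + 1) * ‖b n‖) := by field_simp
    _ ≤ ‖a n‖ / (n + 1) * M := mul_le_mul_of_nonneg_left (hb n) (by positivity)

theorem norm_natCast_add_one (n : ℕ) : ‖((n : 𝕜) + 1)‖ = (n : ℝ) + 1 := by
  rw [← Nat.cast_succ, RCLike.norm_natCast, Nat.cast_succ]

/-- Test against `a = (n + 1) • δₙ`, whose `HL₁`-norm is one. -/
theorem coeff_bound_of_multiplier_bound {b : ℕ → 𝕜} {C : ℝ}
    (hC : ∀ a : ℕ → 𝕜, Summable (fun n : ℕ => ‖a n‖ / ((n : ℝ) + 1)) →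
      ‖∑' n : ℕ, a n * b n‖ ≤ C * ∑' n : ℕ, ‖a n‖ / ((n : ℝ) + 1))
    (n : ℕ) : ((n : ℝ) + 1) * ‖b n‖ ≤ C := by
  have hweight : (fun k : ℕ => ‖Pi.single (M := fun _ => 𝕜) n ((n : 𝕜) + 1) k‖ / ((k : ℝ) + 1))
      = Pi.single n 1 := by
    refine (Pi.single_op (fun (k : ℕ) (x : 𝕜) => ‖x‖ / ((k : ℝ) + 1)) (by simp) n _).symm.trans ?_
    rw [norm_natCast_add_one, div_self (by positivity)]
  have hseries : (fun k : ℕ => Pi.single (M := fun _ => 𝕜) n ((n : 𝕜) + 1) k * b k)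
      = Pi.single n (((n : 𝕜) + 1) * b n) :=
    (Pi.single_op (fun (k : ℕ) (x : 𝕜) => x * b k) (by simp) n _).symm
  have h := hC _ (by rw [hweight]; exact (hasSum_pi_single n 1).summable)
  rwa [hweight, hseries, tsum_pi_single, tsum_pi_single, mul_one, norm_mul,
    norm_natCast_add_one] at h

end RCLike

/-- A coefficient multiplier `(b n)` maps `HL₁` boundedly into functions bounded on the
closed unit disc iff `sup_n (n+1)|b n| < ∞`; moreover the natural bound
`sup_{|z|≤1} |Σ a n b n zⁿ| ≤ ‖f‖_{HL₁} · sup_n (n+1)|b n|` holds. -/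
theorem HL1_multiplier_characterization (b : ℕ → ℂ) :
    ((∃ C : ℝ, ∀ a : ℕ → ℂ, Summable (fun n : ℕ => ‖a n‖ / ((n : ℝ) + 1)) →
        ∀ z : ℂ, ‖z‖ ≤ 1 →
          ‖∑' n : ℕ, a n * b n * z ^ n‖ ≤ C * ∑' n : ℕ, ‖a n‖ / ((n : ℝ) + 1)) ↔
      (∃ M : ℝ, ∀ n : ℕ, ((n : ℝ) + 1) * ‖b n‖ ≤ M)) ∧
    (BddAbove (Set.range fun n : ℕ => ((n : ℝ) + 1) * ‖b n‖) →
      ∀ a : ℕ → ℂ, Summable (fun n : ℕ => ‖a n‖ / ((n : ℝ) + 1)) →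
        ∀ z : ℂ, ‖z‖ ≤ 1 →
          ‖∑' n : ℕ, a n * b n * z ^ n‖ ≤
            (∑' n : ℕ, ‖a n‖ / ((n : ℝ) + 1)) * ⨆ n : ℕ, ((n : ℝ) + 1) * ‖b n‖) := by
  refine ⟨⟨fun ⟨C, hC⟩ => ⟨C, coeff_bound_of_multiplier_bound fun a ha => ?_⟩,
    fun ⟨M, hM⟩ => ⟨M, fun a ha z hz => ?_⟩⟩,
    fun hbdd a ha z hz => norm_tsum_mul_mul_pow_le (le_ciSup hbdd) ha hz⟩
  · simpa using hC a ha 1 norm_one.le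
  · rw [mul_comm]
    exact norm_tsum_mul_mul_pow_le hM ha hz
end

section
/- Let g(z) = Σ_{n≥0} c_n z^n be analytic on the unit disc with c_n ≥ 0 for all n. Then Σ_{n≥0} c_{n+1} log(n+2) < ∞ if and only if ∫_0^1 M_∞(t, g') log(e/(1-t)) dt < ∞, where M_∞(t,g') = max_{|z|=t} |g'(z)|; moreover the two quantities are comparable up to absolute constants. -/
/-!
By Tonelli, the integral equals `∑ c_{n+1} J_n` with `J_n = ∫₀¹ (n+1) tⁿ log (e/(1-t)) dt`
(`logMoment n`), so it suffices to show `J_n ≍ log (n+2)`. The probability density `(n+1) tⁿ`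
puts mass `≍ 1` on `(1-δ, 1)` for `δ ≍ 1/n`, where `log (e/(1-t)) ≥ 1 - log δ`; this gives the
lower bound. For the upper bound, `log (e/(1-t)) ≤ 1 - log δ` on `(0, 1-δ]`, while on `(1-δ, 1)`
we use `tⁿ ≤ 1` and integrate the logarithm exactly.
-/

open Real MeasureTheory ENNReal Set

theorem setLIntegral_ofReal_tsum {α : Type*} [MeasurableSpace α] {μ : Measure α} {s : Set α}
    (hs : MeasurableSet s) {f : ℕ → α → ℝ} (hf : ∀ n, Measurable (f n))
    (hf₀ : ∀ n, ∀ x ∈ s, 0 ≤ f n x) (hsum : ∀ x ∈ s, Summable fun n => f n x) :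
    ∫⁻ x in s, ENNReal.ofReal (∑' n, f n x) ∂μ = ∑' n, ∫⁻ x in s, ENNReal.ofReal (f n x) ∂μ := by
  rw [← lintegral_tsum fun n => (hf n).ennreal_ofReal.aemeasurable]
  exact setLIntegral_congr_fun hs fun x hx =>
    ENNReal.ofReal_tsum_of_nonneg (fun n => hf₀ n x hx) (hsum x hx)

theorem log_exp_one_div_one_sub {t : ℝ} (ht : t < 1) :
    Real.log (Real.exp 1 / (1 - t)) = 1 - Real.log (1 - t) := by
  rw [Real.log_div (exp_ne_zero 1) (by linarith), log_exp]

theorem one_le_log_exp_one_div_one_sub {t : ℝ} (ht₀ : 0 ≤ t) (ht₁ : t < 1) :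
    1 ≤ Real.log (Real.exp 1 / (1 - t)) := by
  rw [log_exp_one_div_one_sub ht₁]
  linarith [log_nonpos (by linarith : 0 ≤ 1 - t) (by linarith)]

theorem lintegral_Ioo_zero_one_pow (n : ℕ) :
    ∫⁻ t in Ioo (0:ℝ) 1, ENNReal.ofReal (((n:ℝ) + 1) * t ^ n) = 1 := by
  have hint : IntegrableOn (fun t : ℝ => ((n:ℝ) + 1) * t ^ n) (Ioo 0 1) :=
    (continuous_const.mul (continuous_pow n)).integrableOn_Icc.mono_set Ioo_subset_Icc_self
  rw [← ofReal_integral_eq_lintegral_ofReal hint, ← integral_Ioc_eq_integral_Ioo,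
    ← intervalIntegral.integral_of_le zero_le_one, intervalIntegral.integral_const_mul,
    integral_pow]
  · field_simp
    simp
  · filter_upwards [ae_restrict_mem measurableSet_Ioo] with t ht
    exact mul_nonneg (by positivity) (pow_nonneg ht.1.le n)

theorem lintegral_Ioo_one_sub_log_exp_one_div {δ : ℝ} (hδ₀ : 0 < δ) (hδ₁ : δ ≤ 1) :
    ∫⁻ t in Ioo (1 - δ) 1, ENNReal.ofReal (Real.log (Real.exp 1 / (1 - t)))
      = ENNReal.ofReal (δ * (2 - Real.log δ)) := by
  have hlog : IntervalIntegrable (fun t : ℝ => Real.log (1 - t)) volume (1 - δ) 1 := by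
    simpa using (intervalIntegral.intervalIntegrable_log' (a := δ) (b := 0)).comp_sub_left 1
  have hint : IntegrableOn (fun t : ℝ => 1 - Real.log (1 - t)) (Ioo (1 - δ) 1) :=
    (intervalIntegrable_iff_integrableOn_Ioo_of_le (by linarith)).mp
      (intervalIntegrable_const.sub hlog)
  rw [setLIntegral_congr_fun measurableSet_Ioo fun t ht =>
      congrArg ENNReal.ofReal (log_exp_one_div_one_sub ht.2),
    ← ofReal_integral_eq_lintegral_ofReal hint, ← integral_Ioc_eq_integral_Ioo,
    ← intervalIntegral.integral_of_le (by linarith), intervalIntegral.integral_sub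
      intervalIntegrable_const hlog,
    intervalIntegral.integral_comp_sub_left (fun x => Real.log x) 1, integral_log]
  · congr 1
    simp only [intervalIntegral.integral_const, smul_eq_mul, mul_one, sub_self,
      Real.log_zero, mul_zero, sub_zero, add_zero]
    rw [_root_.sub_sub_cancel]
    ring
  · filter_upwards [ae_restrict_mem measurableSet_Ioo] with t ht
    rw [← log_exp_one_div_one_sub ht.2]
    exact zero_le_one.trans (one_le_log_exp_one_div_one_sub (by linarith [ht.1]) ht.2)

noncomputable def logMoment (n : ℕ) : ℝ≥0∞ :=
  ∫⁻ t in Ioo (0:ℝ) 1, ENNReal.ofReal (((n:ℝ) + 1) * t ^ n * Real.log (Real.exp 1 / (1 - t)))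

theorem logMoment_le {δ : ℝ} (hδ₀ : 0 < δ) (hδ₁ : δ ≤ 1) (n : ℕ) :
    logMoment n ≤ ENNReal.ofReal (1 - Real.log δ)
      + ENNReal.ofReal (((n:ℝ) + 1) * (δ * (2 - Real.log δ))) := by
  have hlogδ : Real.log δ ≤ 0 := log_nonpos hδ₀.le hδ₁
  rw [logMoment, ← Ioc_union_Ioo_eq_Ioo (by linarith : (0:ℝ) ≤ 1 - δ) (by linarith),
    lintegral_union measurableSet_Ioo (Ioc_disjoint_Ioi_same.mono_right Ioo_subset_Ioi_self)]
  gcongr ?_ + ?_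
  · calc _ ≤ ∫⁻ t in Ioc 0 (1 - δ),
          ENNReal.ofReal (1 - Real.log δ) * ENNReal.ofReal (((n:ℝ) + 1) * t ^ n) := by
          refine setLIntegral_mono (by fun_prop) fun t ht => ?_
          rw [← ENNReal.ofReal_mul (by linarith), log_exp_one_div_one_sub (by linarith [ht.2]),
            mul_comm]
          have : Real.log δ ≤ Real.log (1 - t) := log_le_log hδ₀ (by linarith [ht.2])
          have : 0 ≤ t := ht.1.le
          gcongr
      _ ≤ ENNReal.ofReal (1 - Real.log δ) *
          ∫⁻ t in Ioo (0:ℝ) 1, ENNReal.ofReal (((n:ℝ) + 1) * t ^ n) := by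
          rw [lintegral_const_mul _ (by fun_prop)]
          gcongr
          linarith
      _ = _ := by rw [lintegral_Ioo_zero_one_pow, mul_one]
  · calc _ ≤ ∫⁻ t in Ioo (1 - δ) 1,
          ENNReal.ofReal ((n:ℝ) + 1) * ENNReal.ofReal (Real.log (Real.exp 1 / (1 - t))) := by
          refine setLIntegral_mono (by fun_prop) fun t ht => ?_
          rw [← ENNReal.ofReal_mul (by positivity)]
          have ht₀ : 0 ≤ t := by linarith [ht.1]
          have := zero_le_one.trans (one_le_log_exp_one_div_one_sub ht₀ ht.2)
          gcongr
          exact mul_le_of_le_one_right (by positivity) (pow_le_one₀ ht₀ ht.2.le)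
      _ = _ := by
          rw [lintegral_const_mul _ (by fun_prop), lintegral_Ioo_one_sub_log_exp_one_div hδ₀ hδ₁,
            ← ENNReal.ofReal_mul (by positivity)]

theorem ofReal_le_logMoment {δ : ℝ} (hδ₀ : 0 < δ) (hδ₁ : δ ≤ 1) (n : ℕ) :
    ENNReal.ofReal (((n:ℝ) + 1) * (1 - δ) ^ n * (1 - Real.log δ) * δ) ≤ logMoment n := by
  calc _ = ∫⁻ _ in Ioo (1 - δ) 1,
        ENNReal.ofReal (((n:ℝ) + 1) * (1 - δ) ^ n * (1 - Real.log δ)) := by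
        have : 0 ≤ 1 - δ := by linarith
        have : 0 ≤ 1 - Real.log δ := by linarith [log_nonpos hδ₀.le hδ₁]
        rw [setLIntegral_const, volume_Ioo, _root_.sub_sub_cancel,
          ← ENNReal.ofReal_mul (by positivity)]
    _ ≤ ∫⁻ t in Ioo (1 - δ) 1,
        ENNReal.ofReal (((n:ℝ) + 1) * t ^ n * Real.log (Real.exp 1 / (1 - t))) := by
        refine setLIntegral_mono (by fun_prop) fun t ht => ENNReal.ofReal_le_ofReal ?_
        rw [log_exp_one_div_one_sub ht.2]
        have : Real.log (1 - t) ≤ Real.log δ := log_le_log (by linarith [ht.2]) (by linarith [ht.1])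
        have : 0 ≤ 1 - δ := by linarith
        have : 0 ≤ 1 - Real.log δ := by linarith [log_nonpos hδ₀.le hδ₁]
        have : (1 - δ) ^ n ≤ t ^ n := pow_le_pow_left₀ (by linarith) ht.1.le n
        have : 0 ≤ t := by linarith [ht.1]
        gcongr
    _ ≤ logMoment n := lintegral_mono_set (Ioo_subset_Ioo_left (by linarith))

theorem ofReal_log_le_four_mul_logMoment (n : ℕ) :
    ENNReal.ofReal (Real.log ((n:ℝ) + 2)) ≤ 4 * logMoment n := by
  set δ : ℝ := (2 * ((n:ℝ) + 1))⁻¹ with hδ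
  have hδ₀ : 0 < δ := by positivity
  have hnδ : ((n:ℝ) + 1) * δ = 1 / 2 := by rw [hδ]; field_simp
  have hδ₁ : δ ≤ 1 := by nlinarith
  have hpow : 1 / 2 ≤ (1 - δ) ^ n := by
    have := one_add_mul_le_pow (a := -δ) (by linarith) n
    rw [← sub_eq_add_neg] at this
    nlinarith
  have hlog : Real.log ((n:ℝ) + 2) ≤ 1 - Real.log δ := by
    have := Real.log_le_log (by positivity) (by linarith : (n:ℝ) + 2 ≤ 2 * ((n:ℝ) + 1))
    rw [hδ, Real.log_inv]
    linarith
  have hL : 0 ≤ Real.log ((n:ℝ) + 2) := Real.log_nonneg (by linarith)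
  calc ENNReal.ofReal (Real.log ((n:ℝ) + 2))
      ≤ 4 * ENNReal.ofReal (((n:ℝ) + 1) * (1 - δ) ^ n * (1 - Real.log δ) * δ) := by
        rw [← ENNReal.ofReal_ofNat, ← ENNReal.ofReal_mul (by norm_num)]
        refine ENNReal.ofReal_le_ofReal ?_
        rw [show ((n:ℝ) + 1) * (1 - δ) ^ n * (1 - Real.log δ) * δ
            = ((n:ℝ) + 1) * δ * ((1 - δ) ^ n * (1 - Real.log δ)) by ring, hnδ]
        nlinarith [mul_le_mul_of_nonneg_right hpow (hL.trans hlog)]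
    _ ≤ 4 * logMoment n := by gcongr; exact ofReal_le_logMoment hδ₀ hδ₁ n

theorem logMoment_le_seven_mul_ofReal_log (n : ℕ) :
    logMoment n ≤ 7 * ENNReal.ofReal (Real.log ((n:ℝ) + 2)) := by
  set δ : ℝ := ((n:ℝ) + 2)⁻¹ with hδ
  have hδ₀ : 0 < δ := by positivity
  have hnδ : ((n:ℝ) + 1) * δ ≤ 1 := by
    rw [hδ, ← div_eq_mul_inv, div_le_one (by positivity)]; linarith
  have hδ₁ : δ ≤ 1 := by nlinarith
  have hlogδ : Real.log δ = -Real.log ((n:ℝ) + 2) := Real.log_inv _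
  have hL : 2 / 3 ≤ Real.log ((n:ℝ) + 2) := by
    have := Real.log_le_log (by norm_num) (by linarith : (2:ℝ) ≤ (n:ℝ) + 2)
    linarith [Real.log_two_gt_d9]
  calc logMoment n
      ≤ ENNReal.ofReal (1 - Real.log δ)
        + ENNReal.ofReal (((n:ℝ) + 1) * (δ * (2 - Real.log δ))) := logMoment_le hδ₀ hδ₁ n
    _ ≤ ENNReal.ofReal (7 * Real.log ((n:ℝ) + 2)) := by
        have : 0 ≤ 2 - Real.log δ := by linarith
        rw [← ENNReal.ofReal_add (by linarith) (by positivity)]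
        refine ENNReal.ofReal_le_ofReal ?_
        rw [hlogδ]
        nlinarith
    _ = 7 * ENNReal.ofReal (Real.log ((n:ℝ) + 2)) := by
        rw [ENNReal.ofReal_mul (by norm_num), ENNReal.ofReal_ofNat]

theorem lintegral_tsum_mul_log_eq_tsum_logMoment {a : ℕ → ℝ} (ha : ∀ n, 0 ≤ a n)
    (hsum : ∀ t : ℝ, 0 ≤ t → t < 1 → Summable fun n : ℕ => ((n:ℝ) + 1) * a n * t ^ n) :
    ∫⁻ t in Ioo (0:ℝ) 1, ENNReal.ofReal ((∑' n : ℕ, ((n:ℝ) + 1) * a n * t ^ n) *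
        Real.log (Real.exp 1 / (1 - t)))
      = ∑' n, ENNReal.ofReal (a n) * logMoment n := by
  simp_rw [← tsum_mul_right]
  rw [setLIntegral_ofReal_tsum measurableSet_Ioo (fun n => by fun_prop)
    (fun n t ht => ?nonneg) (fun t ht => (hsum t ht.1.le ht.2).mul_right _)]
  case nonneg =>
    have := one_le_log_exp_one_div_one_sub ht.1.le ht.2
    have := ht.1.le
    have := ha n
    positivity
  refine tsum_congr fun n => ?_
  rw [logMoment, ← lintegral_const_mul _ (by fun_prop)]
  refine setLIntegral_congr_fun measurableSet_Ioo fun t ht => ?_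
  rw [← ENNReal.ofReal_mul (ha n)]
  ring_nf

/-- For `g(z) = Σ cₙ zⁿ` with nonnegative Maclaurin coefficients,
`Σ c_{n+1} log(n+2)` and `∫₀¹ M_∞(t,g') log(e/(1-t)) dt` are comparable up to
absolute constants (in particular one is finite iff the other is). Here
`M_∞(t,g') = Σ (n+1)c_{n+1} tⁿ` since the coefficients are nonnegative. -/
theorem log_coefficient_integral_comparable :
    ∃ C : ℝ≥0∞, 0 < C ∧ C ≠ ⊤ ∧
      ∀ c : ℕ → ℝ, (∀ n, 0 ≤ c n) →
        (∀ t : ℝ, 0 ≤ t → t < 1 → Summable (fun n : ℕ => ((n : ℝ) + 1) * c (n + 1) * t ^ n)) →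
        (∑' n : ℕ, ENNReal.ofReal (c (n + 1) * Real.log ((n : ℝ) + 2))) ≤
            C * ∫⁻ t in Set.Ioo (0:ℝ) 1,
              ENNReal.ofReal ((∑' n : ℕ, ((n : ℝ) + 1) * c (n + 1) * t ^ n) *
                Real.log (Real.exp 1 / (1 - t))) ∧
          (∫⁻ t in Set.Ioo (0:ℝ) 1,
              ENNReal.ofReal ((∑' n : ℕ, ((n : ℝ) + 1) * c (n + 1) * t ^ n) *
                Real.log (Real.exp 1 / (1 - t)))) ≤
            C * ∑' n : ℕ, ENNReal.ofReal (c (n + 1) * Real.log ((n : ℝ) + 2)) := by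
  refine ⟨7, by norm_num, by norm_num, fun c hc hsum => ?_⟩
  rw [lintegral_tsum_mul_log_eq_tsum_logMoment (fun n => hc (n + 1)) hsum]
  simp_rw [ENNReal.ofReal_mul (hc _), ← ENNReal.tsum_mul_left, mul_left_comm (7 : ℝ≥0∞)]
  refine ⟨ENNReal.tsum_le_tsum fun n => ?_, ENNReal.tsum_le_tsum fun n => ?_⟩
  · gcongr
    exact (ofReal_log_le_four_mul_logMoment n).trans (by gcongr; norm_num)
  · gcongr
    exact logMoment_le_seven_mul_ofReal_log n
end

section
/- For every n ∈ ℕ, ∫_0^1 t^n log(e/(1-t)) dt is comparable (with absolute implicit constants) to log(n+2)/(n+1). -/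
open Real

/-!
Integrating by parts against the primitive `t ^ (n + 1) - 1` of `(n + 1) t ^ n` evaluates the
integral exactly: `∫₀¹ tⁿ log (e / (1 - t)) dt = (1 + H_{n+1}) / (n + 1)`, where `H` is the harmonic
number. The comparison then follows from `log (n + 2) ≤ H_{n+1} ≤ 1 + log (n + 1)`.
-/

open MeasureTheory intervalIntegral Finset

lemma continuous_one_sub_pow_mul_log_one_sub (n : ℕ) :
    Continuous fun t : ℝ ↦ (1 - t ^ n) * log (1 - t) := by
  have h : (fun t : ℝ ↦ (1 - t ^ n) * log (1 - t)) =
      fun t ↦ (∑ k ∈ range n, t ^ k) * ((1 - t) * log (1 - t)) := by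
    ext t
    rw [← geom_sum_mul_neg, mul_assoc]
  rw [h]
  exact (continuous_finsetSum _ fun k _ ↦ continuous_pow k).mul
    (continuous_mul_log.comp (continuous_const.sub continuous_id))

lemma hasDerivAt_one_sub_pow_mul_log_one_sub_add_sum (n : ℕ) {t : ℝ} (ht : t ≠ 1) :
    HasDerivAt (fun t : ℝ ↦ (1 - t ^ (n + 1)) * log (1 - t) +
        ∑ k ∈ range (n + 1), t ^ (k + 1) / (k + 1))
      ((n + 1) * (t ^ n * -log (1 - t))) t := by
  have h1t : (1 : ℝ) - t ≠ 0 := sub_ne_zero.mpr ht.symm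
  have hlog : HasDerivAt (fun t : ℝ ↦ log (1 - t)) (-1 / (1 - t)) t :=
    ((hasDerivAt_id t).const_sub 1).log h1t
  have hsum : HasDerivAt (fun t : ℝ ↦ ∑ k ∈ range (n + 1), t ^ (k + 1) / (k + 1))
      (∑ k ∈ range (n + 1), t ^ k) t := by
    refine (HasDerivAt.fun_sum (u := range (n + 1)) fun k _ ↦
      (hasDerivAt_pow (k + 1) t).div_const ((k : ℝ) + 1)).congr_deriv
        (sum_congr rfl fun k _ ↦ ?_)
    push_cast
    field_simp
  refine ((((hasDerivAt_pow (n + 1) t).const_sub 1).mul hlog).add hsum).congr_deriv ?_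
  rw [← geom_sum_mul_neg t (n + 1)]
  field_simp
  push_cast
  ring

lemma intervalIntegrable_pow_mul_neg_log_one_sub (n : ℕ) :
    IntervalIntegrable (fun t : ℝ ↦ t ^ n * -log (1 - t)) volume 0 1 := by
  have hlog : IntervalIntegrable (fun t : ℝ ↦ log (1 - t)) volume 0 1 := by
    simpa using (intervalIntegrable_log' (a := 1) (b := 0)).comp_sub_left 1
  exact hlog.neg.continuousOn_mul (continuous_pow n).continuousOn

theorem integral_pow_mul_neg_log_one_sub (n : ℕ) :
    ∫ t in (0 : ℝ)..1, t ^ n * -log (1 - t) = harmonic (n + 1) / (n + 1) := by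
  have hFTC := integral_eq_sub_of_hasDerivAt_of_le zero_le_one
    ((continuous_one_sub_pow_mul_log_one_sub (n + 1)).add
      (continuous_finsetSum _ fun k _ ↦ (continuous_pow (k + 1)).div_const _)).continuousOn
    (fun t ht ↦ hasDerivAt_one_sub_pow_mul_log_one_sub_add_sum n ht.2.ne)
    ((intervalIntegrable_pow_mul_neg_log_one_sub n).const_mul ((n : ℝ) + 1))
  rw [intervalIntegral.integral_const_mul] at hFTC
  rw [eq_div_iff (by positivity), mul_comm, hFTC]
  simp [harmonic]

theorem integral_pow_mul_log_exp_one_div_one_sub (n : ℕ) :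
    ∫ t in (0 : ℝ)..1, t ^ n * log (exp 1 / (1 - t)) = (1 + harmonic (n + 1)) / (n + 1) := by
  have hsplit : ∫ t in (0 : ℝ)..1, t ^ n * log (exp 1 / (1 - t)) =
      ∫ t in (0 : ℝ)..1, (t ^ n + t ^ n * -log (1 - t)) := by
    -- `log (e / (1 - t)) = 1 - log (1 - t)` fails only at `t = 1`, where `log (e / 0) = log 0 = 0`.
    refine integral_congr_ae ?_
    filter_upwards [volume.ae_ne 1] with t ht _
    rw [log_div (exp_ne_zero 1) (sub_ne_zero.mpr ht.symm), log_exp]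
    ring
  rw [hsplit,
    integral_add (intervalIntegrable_pow n) (intervalIntegrable_pow_mul_neg_log_one_sub n),
    integral_pow, integral_pow_mul_neg_log_one_sub]
  ring

theorem log_add_two_le_one_add_harmonic_succ (n : ℕ) : log (n + 2) ≤ 1 + harmonic (n + 1) := by
  have h := log_add_one_le_harmonic (n + 1)
  push_cast at h
  rw [add_assoc, one_add_one_eq_two] at h
  linarith

theorem one_add_harmonic_succ_le_four_mul_log (n : ℕ) :
    1 + harmonic (n + 1) ≤ 4 * log (n + 2) := by
  have h := harmonic_le_one_add_log (n + 1)
  have hlog_succ : log (n + 1) ≤ log (n + 2) := log_le_log (by positivity) (by linarith)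
  have hlog2 : log 2 ≤ log (n + 2) := log_le_log two_pos (by simp)
  have := log_two_gt_d9
  push_cast at h
  linarith

/-- `∫₀¹ tⁿ log(e/(1-t)) dt ≍ log(n+2)/(n+1)` with absolute constants. -/
theorem integral_pow_log_comparable :
    ∃ C₁ C₂ : ℝ, 0 < C₁ ∧ 0 < C₂ ∧ ∀ n : ℕ,
      C₁ * (Real.log ((n : ℝ) + 2) / ((n : ℝ) + 1)) ≤
          (∫ t in (0:ℝ)..1, t ^ n * Real.log (Real.exp 1 / (1 - t))) ∧
        (∫ t in (0:ℝ)..1, t ^ n * Real.log (Real.exp 1 / (1 - t))) ≤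
          C₂ * (Real.log ((n : ℝ) + 2) / ((n : ℝ) + 1)) := by
  refine ⟨1, 4, one_pos, four_pos, fun n ↦ ?_⟩
  rw [integral_pow_mul_log_exp_one_div_one_sub, one_mul, ← mul_div_assoc]
  constructor
  · gcongr
    exact log_add_two_le_one_add_harmonic_succ n
  · gcongr
    exact one_add_harmonic_succ_le_four_mul_log n
end

section
/- If g is analytic on the unit disc 𝔻 with ∫_0^1 M_∞(s,g') log(e/(1-s)) ds < ∞, then for every analytic f on 𝔻 the function T_g(f)(z) = ∫_0^z f(ζ)g'(ζ) dζ is bounded on 𝔻, with sup_{z∈𝔻} |T_g(f)(z)| ≤ ‖f‖_{H^∞_log} · ∫_0^1 M_∞(s,g') log(e/(1-s)) ds, where ‖f‖_{H^∞_log} = sup_{z∈𝔻} |f(z)| (log(e/(1-|z|)))^{-1}. -/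
open Real Complex MeasureTheory

/-!
The integrand of `T_g(f)(z)` at `ζ = t z` is bounded by `B · M_∞(t|z|, g') · log(e/(1 - t|z|)) · |z|`,
and the substitution `s = t|z|` turns the integral of this bound over `t ∈ [0, 1]` into the
integral of the weight `M_∞(s, g') log(e/(1 - s))` over `[0, |z|] ⊆ [0, 1]`.
-/

theorem Real.log_exp_one_div_one_sub_nonneg {s : ℝ} (hs₀ : 0 ≤ s) (hs₁ : s ≤ 1) :
    0 ≤ Real.log (Real.exp 1 / (1 - s)) := by
  rcases hs₁.lt_or_eq with hs₁ | rfl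
  · refine Real.log_nonneg ?_
    rw [le_div_iff₀ (by linarith), one_mul]
    linarith [Real.one_le_exp zero_le_one]
  · simp -- junk value: `log (e / 0) = log 0 = 0`

theorem norm_integral_segment_le {F : ℂ → ℂ} {ρ : ℝ → ℝ} {z : ℂ}
    (hρ : IntervalIntegrable ρ volume 0 ‖z‖)
    (hF : ∀ w : ℂ, ‖w‖ ≤ ‖z‖ → ‖F w‖ ≤ ρ ‖w‖) :
    ‖∫ t in (0:ℝ)..1, F ((t : ℂ) * z) * z‖ ≤ ∫ s in (0:ℝ)..‖z‖, ρ s := by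
  rcases eq_or_ne z 0 with rfl | hz
  · simp
  have hr : ‖z‖ ≠ 0 := norm_ne_zero_iff.mpr hz
  have hbound : ∀ t ∈ Set.Ioc (0:ℝ) 1, ‖F ((t : ℂ) * z) * z‖ ≤ ‖z‖ * ρ (t * ‖z‖) := by
    intro t ht
    have hnorm : ‖(t : ℂ) * z‖ = t * ‖z‖ := by
      rw [norm_mul, Complex.norm_real, Real.norm_of_nonneg ht.1.le]
    rw [norm_mul, mul_comm, ← hnorm]
    refine mul_le_mul_of_nonneg_left (hF _ ?_) (norm_nonneg z)
    rw [hnorm]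
    exact mul_le_of_le_one_left (norm_nonneg z) ht.2
  have hint : IntervalIntegrable (fun t => ‖z‖ * ρ (t * ‖z‖)) volume 0 1 := by
    simpa [hr] using (hρ.comp_mul_right (c := ‖z‖)).const_mul ‖z‖
  calc ‖∫ t in (0:ℝ)..1, F ((t : ℂ) * z) * z‖
      ≤ ∫ t in (0:ℝ)..1, ‖z‖ * ρ (t * ‖z‖) :=
        intervalIntegral.norm_integral_le_of_norm_le zero_le_one (ae_of_all _ hbound) hint
    _ = ∫ s in (0:ℝ)..‖z‖, ρ s := by
        rw [intervalIntegral.integral_const_mul, intervalIntegral.mul_integral_comp_mul_right,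
          zero_mul, one_mul]

theorem Tg_bounded_Hinftylog_to_Hinfty_general (g : ℂ → ℂ)
    (M : ℝ → ℝ)
    (hM : ∀ s : ℝ, 0 ≤ s → s < 1 →
      IsGreatest ((fun z : ℂ => ‖deriv g z‖) '' Metric.sphere (0 : ℂ) s) (M s))
    (hint : IntervalIntegrable (fun s : ℝ => M s * Real.log (Real.exp 1 / (1 - s)))
      MeasureTheory.volume 0 1)
    (f : ℂ → ℂ)
    (B : ℝ) (hB : ∀ z : ℂ, ‖z‖ < 1 → ‖f z‖ ≤ B * Real.log (Real.exp 1 / (1 - ‖z‖))) :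
    ∀ z : ℂ, ‖z‖ < 1 →
      ‖∫ t in (0:ℝ)..1, f ((t : ℂ) * z) * deriv g ((t : ℂ) * z) * z‖ ≤
        B * ∫ s in (0:ℝ)..1, M s * Real.log (Real.exp 1 / (1 - s)) := by
  intro z hz
  have hB₀ : 0 ≤ B := by simpa using (norm_nonneg _).trans (hB 0 (by simp))
  have hM₀ : ∀ s, 0 ≤ s → s < 1 → 0 ≤ M s := by
    intro s hs₀ hs₁
    obtain ⟨w, -, hw⟩ := (hM s hs₀ hs₁).1
    exact hw ▸ norm_nonneg _
  have hweight₀ : ∀ s ∈ Set.Ioc (0:ℝ) 1, 0 ≤ M s * Real.log (Real.exp 1 / (1 - s)) := by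
    rintro s ⟨hs₀, hs₁⟩
    rcases hs₁.lt_or_eq with hs₁ | rfl
    · exact mul_nonneg (hM₀ s hs₀.le hs₁) (Real.log_exp_one_div_one_sub_nonneg hs₀.le hs₁.le)
    · simp
  have hbound : ∀ w : ℂ, ‖w‖ ≤ ‖z‖ →
      ‖f w * deriv g w‖ ≤ B * (M ‖w‖ * Real.log (Real.exp 1 / (1 - ‖w‖))) := by
    intro w hw
    have hw₁ : ‖w‖ < 1 := hw.trans_lt hz
    have hg' : ‖deriv g w‖ ≤ M ‖w‖ := (hM ‖w‖ (norm_nonneg w) hw₁).2 ⟨w, by simp, rfl⟩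
    calc ‖f w * deriv g w‖ ≤ B * Real.log (Real.exp 1 / (1 - ‖w‖)) * M ‖w‖ := by
          rw [norm_mul]
          exact mul_le_mul (hB w hw₁) hg' (norm_nonneg _)
            (mul_nonneg hB₀ (Real.log_exp_one_div_one_sub_nonneg (norm_nonneg w) hw₁.le))
      _ = B * (M ‖w‖ * Real.log (Real.exp 1 / (1 - ‖w‖))) := by ring
  have hint_z := (hint.const_mul B).mono_set (by
    rw [Set.uIcc_of_le (norm_nonneg z), Set.uIcc_of_le zero_le_one]
    exact Set.Icc_subset_Icc le_rfl hz.le)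
  calc _ ≤ ∫ s in (0:ℝ)..‖z‖, B * (M s * Real.log (Real.exp 1 / (1 - s))) :=
        norm_integral_segment_le (F := fun w => f w * deriv g w) hint_z hbound
    _ = B * ∫ s in (0:ℝ)..‖z‖, M s * Real.log (Real.exp 1 / (1 - s)) :=
        intervalIntegral.integral_const_mul _ _
    _ ≤ B * ∫ s in (0:ℝ)..1, M s * Real.log (Real.exp 1 / (1 - s)) := by
        refine mul_le_mul_of_nonneg_left ?_ hB₀
        exact intervalIntegral.integral_mono_interval le_rfl (norm_nonneg z) hz.le
          ((ae_restrict_iff' measurableSet_Ioc).mpr (ae_of_all _ hweight₀)) hint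

/-- If `∫₀¹ M_∞(s,g') log(e/(1-s)) ds < ∞`, then `T_g` maps `H^∞_log` into `H^∞`:
for every analytic `f` on the disc with `|f(z)| ≤ B·log(e/(1-|z|))`, the function
`T_g(f)(z) = ∫₀^z f(ζ)g'(ζ)dζ` satisfies
`|T_g(f)(z)| ≤ B · ∫₀¹ M_∞(s,g') log(e/(1-s)) ds` for all `z ∈ 𝔻`. -/
theorem Tg_bounded_Hinftylog_to_Hinfty (g : ℂ → ℂ)
    (hg : DifferentiableOn ℂ g (Metric.ball (0 : ℂ) 1))
    (M : ℝ → ℝ)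
    (hM : ∀ s : ℝ, 0 ≤ s → s < 1 →
      IsGreatest ((fun z : ℂ => ‖deriv g z‖) '' Metric.sphere (0 : ℂ) s) (M s))
    (hint : IntervalIntegrable (fun s : ℝ => M s * Real.log (Real.exp 1 / (1 - s)))
      MeasureTheory.volume 0 1)
    (f : ℂ → ℂ) (hf : DifferentiableOn ℂ f (Metric.ball (0 : ℂ) 1))
    (B : ℝ) (hB : ∀ z : ℂ, ‖z‖ < 1 → ‖f z‖ ≤ B * Real.log (Real.exp 1 / (1 - ‖z‖))) :
    ∀ z : ℂ, ‖z‖ < 1 →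
      ‖∫ t in (0:ℝ)..1, f ((t : ℂ) * z) * deriv g ((t : ℂ) * z) * z‖ ≤
        B * ∫ s in (0:ℝ)..1, M s * Real.log (Real.exp 1 / (1 - s)) :=
  Tg_bounded_Hinftylog_to_Hinfty_general g M hM hint f B hB
end

section
/- For each radial weight ν on [0,1) (a nonnegative integrable function) and each n ∈ {1,2}, there is a constant C = C(ν) > 0 such that ∫_0^1 s^x (log(1/s))^n ν(s) ds ≤ C ∫_0^1 s^x ν(s) ds for all real x ≥ 2. -/
/-!
Choose `a ∈ (0,1)` with `m = ∫_a^1 ν > 0`; such an `a` exists unless `ν = 0` a.e., where both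
sides vanish. Since `s log(1/s) ≤ 1` on `[0,1]`, `s^x log(1/s)^n ≤ s^(x-2) ≤ a^(x-2)` on `(0,a)`,
so the integral over `(0,a)` is at most `a^(x-2) ∫_0^a ν = (∫_0^a ν / (a^2 m)) · a^x m`, and
`a^x m ≤ ∫_a^1 s^x ν`. On `(a,1)` one simply uses `log(1/s)^n ≤ log(1/a)^n`.
-/

open Real MeasureTheory Set

lemma intervalIntegral.integral_nonneg_of_forall_Ioo {f : ℝ → ℝ} {a b : ℝ} (hab : a ≤ b)
    (hf : ∀ x ∈ Ioo a b, 0 ≤ f x) : 0 ≤ ∫ x in a..b, f x := by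
  rw [intervalIntegral.integral_of_le hab, integral_Ioc_eq_integral_Ioo]
  exact setIntegral_nonneg measurableSet_Ioo hf

open Filter Topology in
lemma exists_mem_Ioo_integral_pos {f : ℝ → ℝ} {a b : ℝ} (hab : a < b)
    (hf : IntervalIntegrable f volume a b) (h : 0 < ∫ x in a..b, f x) :
    ∃ c ∈ Ioo a b, 0 < ∫ x in c..b, f x := by
  have hcont : ContinuousWithinAt (fun c => ∫ x in c..b, f x) (Ioo a b) a := by
    refine (intervalIntegral.continuousOn_primitive_interval_left (a := a) ?_ a
      left_mem_uIcc).mono ?_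
    · rwa [uIcc_of_le hab.le, ← intervalIntegrable_iff_integrableOn_Icc_of_le hab.le]
    · rw [uIcc_of_le hab.le]; exact Ioo_subset_Icc_self
  have := left_nhdsWithin_Ioo_neBot hab
  exact ((hcont.eventually (lt_mem_nhds h)).and self_mem_nhdsWithin).exists.imp
    fun c hc => ⟨hc.2, hc.1⟩

section

variable {ν : ℝ → ℝ} {s x a b : ℝ} {n : ℕ}

lemma log_one_div_nonneg (hs₀ : 0 ≤ s) (hs₁ : s ≤ 1) : 0 ≤ log (1 / s) := by
  rw [one_div, log_inv]
  exact neg_nonneg.2 (log_nonpos hs₀ hs₁)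

lemma sq_mul_log_one_div_pow_le_one (hs₀ : 0 ≤ s) (hs₁ : s ≤ 1) (hn : n ≤ 2) :
    s ^ 2 * log (1 / s) ^ n ≤ 1 := by
  have hsL : s * log (1 / s) = negMulLog s := by
    rw [negMulLog, one_div, log_inv]; ring
  calc s ^ 2 * log (1 / s) ^ n ≤ s ^ n * log (1 / s) ^ n :=
        mul_le_mul_of_nonneg_right (pow_le_pow_of_le_one hs₀ hs₁ hn)
          (pow_nonneg (log_one_div_nonneg hs₀ hs₁) n)
    _ = negMulLog s ^ n := by rw [← hsL, mul_pow]
    _ ≤ 1 := pow_le_one₀ (negMulLog_nonneg hs₀ hs₁) (by linarith [negMulLog_le_one_sub_self hs₀])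

lemma rpow_mul_log_one_div_pow_le_rpow_sub_two (hs₀ : 0 ≤ s) (hs₁ : s ≤ 1) (hx : 2 ≤ x)
    (hn : n ≤ 2) : s ^ x * log (1 / s) ^ n ≤ s ^ (x - 2) := by
  have hsplit : s ^ x = s ^ (x - 2) * s ^ 2 := by
    rw [← rpow_natCast, ← rpow_add' hs₀ (by norm_num; linarith)]; norm_num
  calc s ^ x * log (1 / s) ^ n = s ^ (x - 2) * (s ^ 2 * log (1 / s) ^ n) := by
        rw [hsplit]; ring
    _ ≤ s ^ (x - 2) * 1 :=
        mul_le_mul_of_nonneg_left (sq_mul_log_one_div_pow_le_one hs₀ hs₁ hn) (rpow_nonneg hs₀ _)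
    _ = s ^ (x - 2) := mul_one _

lemma rpow_mul_log_one_div_pow_le_one (hs₀ : 0 ≤ s) (hs₁ : s ≤ 1) (hx : 2 ≤ x) (hn : n ≤ 2) :
    s ^ x * log (1 / s) ^ n ≤ 1 :=
  (rpow_mul_log_one_div_pow_le_rpow_sub_two hs₀ hs₁ hx hn).trans
    (rpow_le_one hs₀ hs₁ (by linarith))

lemma intervalIntegrable_rpow_mul_log_one_div_pow_mul (hνi : IntervalIntegrable ν volume a b)
    (ha : 0 ≤ a) (hab : a ≤ b) (hb : b ≤ 1) (hx : 2 ≤ x) (hn : n ≤ 2) :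
    IntervalIntegrable (fun s => s ^ x * log (1 / s) ^ n * ν s) volume a b := by
  rw [intervalIntegrable_iff_integrableOn_Ioo_of_le hab] at hνi ⊢
  refine hνi.bdd_mul (c := 1) (by fun_prop) (ae_restrict_of_forall_mem measurableSet_Ioo ?_)
  intro s hs
  have hs₀ : 0 ≤ s := ha.trans hs.1.le
  have hs₁ : s ≤ 1 := hs.2.le.trans hb
  rw [Real.norm_of_nonneg
    (mul_nonneg (rpow_nonneg hs₀ x) (pow_nonneg (log_one_div_nonneg hs₀ hs₁) n))]
  exact rpow_mul_log_one_div_pow_le_one hs₀ hs₁ hx hn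

lemma intervalIntegrable_rpow_mul (hνi : IntervalIntegrable ν volume a b)
    (ha : 0 ≤ a) (hab : a ≤ b) (hb : b ≤ 1) (hx : 0 ≤ x) :
    IntervalIntegrable (fun s => s ^ x * ν s) volume a b := by
  rw [intervalIntegrable_iff_integrableOn_Ioo_of_le hab] at hνi ⊢
  refine hνi.bdd_mul (c := 1) (by fun_prop) (ae_restrict_of_forall_mem measurableSet_Ioo ?_)
  intro s hs
  have hs₀ : 0 ≤ s := ha.trans hs.1.le
  rw [Real.norm_of_nonneg (rpow_nonneg hs₀ x)]
  exact rpow_le_one hs₀ (hs.2.le.trans hb) hx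

lemma integral_rpow_mul_log_one_div_pow_mul_le_integral (hν : ∀ s ∈ Ioo 0 1, 0 ≤ ν s)
    (hνi : IntervalIntegrable ν volume 0 1) (hx : 2 ≤ x) (hn : n ≤ 2) :
    ∫ s in (0:ℝ)..1, s ^ x * log (1 / s) ^ n * ν s ≤ ∫ s in (0:ℝ)..1, ν s :=
  intervalIntegral.integral_mono_on_of_le_Ioo zero_le_one
    (intervalIntegrable_rpow_mul_log_one_div_pow_mul hνi le_rfl zero_le_one le_rfl hx hn) hνi
    fun s hs => mul_le_of_le_one_left (hν s hs)
      (rpow_mul_log_one_div_pow_le_one hs.1.le hs.2.le hx hn)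

lemma integral_rpow_mul_log_one_div_pow_mul_le_rpow_sub_two_mul (hν : ∀ s ∈ Ioo 0 a, 0 ≤ ν s)
    (hνi : IntervalIntegrable ν volume 0 a) (ha₀ : 0 ≤ a) (ha₁ : a ≤ 1) (hx : 2 ≤ x)
    (hn : n ≤ 2) :
    ∫ s in (0:ℝ)..a, s ^ x * log (1 / s) ^ n * ν s ≤ a ^ (x - 2) * ∫ s in (0:ℝ)..a, ν s := by
  rw [← intervalIntegral.integral_const_mul]
  refine intervalIntegral.integral_mono_on_of_le_Ioo ha₀
    (intervalIntegrable_rpow_mul_log_one_div_pow_mul hνi le_rfl ha₀ ha₁ hx hn)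
    (hνi.const_mul _) fun s hs => mul_le_mul_of_nonneg_right ?_ (hν s hs)
  exact (rpow_mul_log_one_div_pow_le_rpow_sub_two hs.1.le (hs.2.le.trans ha₁) hx hn).trans
    (rpow_le_rpow hs.1.le hs.2.le (by linarith))

lemma integral_rpow_mul_log_one_div_pow_mul_le_log_one_div_pow_mul (hν : ∀ s ∈ Ioo a 1, 0 ≤ ν s)
    (hνi : IntervalIntegrable ν volume a 1) (ha₀ : 0 < a) (ha₁ : a ≤ 1) (hx : 2 ≤ x)
    (hn : n ≤ 2) :
    ∫ s in a..1, s ^ x * log (1 / s) ^ n * ν s ≤ log (1 / a) ^ n * ∫ s in a..1, s ^ x * ν s := by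
  rw [← intervalIntegral.integral_const_mul]
  refine intervalIntegral.integral_mono_on_of_le_Ioo ha₁
    (intervalIntegrable_rpow_mul_log_one_div_pow_mul hνi ha₀.le ha₁ le_rfl hx hn)
    ((intervalIntegrable_rpow_mul hνi ha₀.le ha₁ le_rfl (by linarith)).const_mul _)
    fun s hs => ?_
  have hs₀ : 0 < s := ha₀.trans hs.1
  have hlog : log (1 / s) ^ n ≤ log (1 / a) ^ n :=
    pow_le_pow_left₀ (log_one_div_nonneg hs₀.le hs.2.le)
      (log_le_log (by positivity) (one_div_le_one_div_of_le ha₀ hs.1.le)) n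
  calc s ^ x * log (1 / s) ^ n * ν s = log (1 / s) ^ n * (s ^ x * ν s) := by ring
    _ ≤ log (1 / a) ^ n * (s ^ x * ν s) :=
        mul_le_mul_of_nonneg_right hlog (mul_nonneg (rpow_nonneg hs₀.le x) (hν s hs))

lemma rpow_mul_integral_le_integral_rpow_mul (hν : ∀ s ∈ Ioo a 1, 0 ≤ ν s)
    (hνi : IntervalIntegrable ν volume a 1) (ha₀ : 0 ≤ a) (ha₁ : a ≤ 1) (hx : 0 ≤ x) :
    a ^ x * ∫ s in a..1, ν s ≤ ∫ s in a..1, s ^ x * ν s := by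
  rw [← intervalIntegral.integral_const_mul]
  exact intervalIntegral.integral_mono_on_of_le_Ioo ha₁ (hνi.const_mul _)
    (intervalIntegrable_rpow_mul hνi ha₀ ha₁ le_rfl hx) fun s hs =>
      mul_le_mul_of_nonneg_right (rpow_le_rpow ha₀ hs.1.le hx) (hν s hs)

lemma integral_rpow_mul_log_one_div_pow_mul_le (hν : ∀ s ∈ Ioo 0 1, 0 ≤ ν s)
    (hνi : IntervalIntegrable ν volume 0 1) (ha : a ∈ Ioo 0 1) (hm : 0 < ∫ s in a..1, ν s)
    (hx : 2 ≤ x) (hn : n ≤ 2) :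
    ∫ s in (0:ℝ)..1, s ^ x * log (1 / s) ^ n * ν s ≤
      ((∫ s in (0:ℝ)..a, ν s) / (a ^ 2 * ∫ s in a..1, ν s) + log (1 / a) ^ n) *
        ∫ s in (0:ℝ)..1, s ^ x * ν s := by
  obtain ⟨ha₀, ha₁⟩ := ha
  have ha : a ∈ uIcc 0 1 := by rw [uIcc_of_le zero_le_one]; exact ⟨ha₀.le, ha₁.le⟩
  have hνi₀ := hνi.mono_set (uIcc_subset_uIcc_left ha)
  have hνi₁ := hνi.mono_set (uIcc_subset_uIcc_right ha)
  have hν₀ : ∀ s ∈ Ioo 0 a, 0 ≤ ν s := fun s hs => hν s ⟨hs.1, hs.2.trans ha₁⟩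
  have hν₁ : ∀ s ∈ Ioo a 1, 0 ≤ ν s := fun s hs => hν s ⟨ha₀.trans hs.1, hs.2⟩
  set I := ∫ s in (0:ℝ)..a, ν s
  set m := ∫ s in a..1, ν s
  set J := ∫ s in a..1, s ^ x * ν s
  have hI : 0 ≤ I := intervalIntegral.integral_nonneg_of_forall_Ioo ha₀.le hν₀
  have hJ : J ≤ ∫ s in (0:ℝ)..1, s ^ x * ν s := by
    rw [← intervalIntegral.integral_add_adjacent_intervals
      (intervalIntegrable_rpow_mul hνi₀ le_rfl ha₀.le ha₁.le (by linarith))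
      (intervalIntegrable_rpow_mul hνi₁ ha₀.le ha₁.le le_rfl (by linarith))]
    exact le_add_of_nonneg_left (intervalIntegral.integral_nonneg_of_forall_Ioo ha₀.le
      fun s hs => mul_nonneg (rpow_nonneg hs.1.le x) (hν₀ s hs))
  have hscale : a ^ (x - 2) * I = I / (a ^ 2 * m) * (a ^ x * m) := by
    rw [rpow_sub ha₀, rpow_two]
    field_simp
  calc ∫ s in (0:ℝ)..1, s ^ x * log (1 / s) ^ n * ν s
      = (∫ s in (0:ℝ)..a, s ^ x * log (1 / s) ^ n * ν s) +
          ∫ s in a..1, s ^ x * log (1 / s) ^ n * ν s :=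
        (intervalIntegral.integral_add_adjacent_intervals
          (intervalIntegrable_rpow_mul_log_one_div_pow_mul hνi₀ le_rfl ha₀.le ha₁.le hx hn)
          (intervalIntegrable_rpow_mul_log_one_div_pow_mul hνi₁ ha₀.le ha₁.le le_rfl hx hn)).symm
    _ ≤ a ^ (x - 2) * I + log (1 / a) ^ n * J :=
        add_le_add
          (integral_rpow_mul_log_one_div_pow_mul_le_rpow_sub_two_mul hν₀ hνi₀ ha₀.le ha₁.le hx hn)
          (integral_rpow_mul_log_one_div_pow_mul_le_log_one_div_pow_mul hν₁ hνi₁ ha₀ ha₁.le hx hn)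
    _ ≤ (I / (a ^ 2 * m) + log (1 / a) ^ n) * J := by
        rw [hscale, add_mul]
        gcongr
        exact rpow_mul_integral_le_integral_rpow_mul hν₁ hνi₁ ha₀.le ha₁.le (by linarith)
    _ ≤ (I / (a ^ 2 * m) + log (1 / a) ^ n) * ∫ s in (0:ℝ)..1, s ^ x * ν s :=
        mul_le_mul_of_nonneg_left hJ (add_nonneg (div_nonneg hI (by positivity))
          (pow_nonneg (log_one_div_nonneg ha₀.le ha₁.le) n))

end

/-- For a radial weight `ν` and `n ∈ {1,2}` there is `C = C(ν) > 0` with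
`∫₀¹ s^x (log(1/s))ⁿ ν(s) ds ≤ C ∫₀¹ s^x ν(s) ds` for all real `x ≥ 2`. -/
theorem radial_weight_log_moment (ν : ℝ → ℝ)
    (hνpos : ∀ s ∈ Set.Ico (0:ℝ) 1, 0 ≤ ν s)
    (hνint : IntegrableOn ν (Set.Ico (0:ℝ) 1)) :
    ∃ C : ℝ, 0 < C ∧ ∀ n ∈ ({1, 2} : Set ℕ), ∀ x : ℝ, 2 ≤ x →
      (∫ s in (0:ℝ)..1, s ^ x * Real.log (1 / s) ^ n * ν s) ≤
        C * ∫ s in (0:ℝ)..1, s ^ x * ν s := by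
  have hν : ∀ s ∈ Ioo 0 1, 0 ≤ ν s := fun s hs => hνpos s (Ioo_subset_Ico_self hs)
  have hνi : IntervalIntegrable ν volume 0 1 :=
    (intervalIntegrable_iff_integrableOn_Ico_of_le zero_le_one).2 hνint
  have hn_le : ∀ n ∈ ({1, 2} : Set ℕ), n ≤ 2 := by rintro n (rfl | rfl) <;> norm_num
  have hG : ∀ x : ℝ, 0 ≤ ∫ s in (0:ℝ)..1, s ^ x * ν s := fun x =>
    intervalIntegral.integral_nonneg_of_forall_Ioo zero_le_one
      fun s hs => mul_nonneg (rpow_nonneg hs.1.le x) (hν s hs)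
  rcases (intervalIntegral.integral_nonneg_of_forall_Ioo zero_le_one hν).eq_or_lt with hI | hI
  · refine ⟨1, one_pos, fun n hn x hx => ?_⟩
    calc ∫ s in (0:ℝ)..1, s ^ x * log (1 / s) ^ n * ν s ≤ ∫ s in (0:ℝ)..1, ν s :=
          integral_rpow_mul_log_one_div_pow_mul_le_integral hν hνi hx (hn_le n hn)
      _ = 0 := hI.symm
      _ ≤ 1 * ∫ s in (0:ℝ)..1, s ^ x * ν s := by rw [one_mul]; exact hG x
  · obtain ⟨a, ha, hm⟩ := exists_mem_Ioo_integral_pos zero_lt_one hνi hI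
    set K := log (1 / a)
    have hK : 0 < K := log_pos (by rw [one_div]; exact one_lt_inv_iff₀.2 ha)
    set D := (∫ s in (0:ℝ)..a, ν s) / (a ^ 2 * ∫ s in a..1, ν s)
    have hD : 0 ≤ D := div_nonneg (intervalIntegral.integral_nonneg_of_forall_Ioo ha.1.le
      fun s hs => hν s ⟨hs.1, hs.2.trans ha.2⟩) (by positivity)
    refine ⟨D + K + K ^ 2, by positivity, fun n hn x hx => ?_⟩
    have hKn : K ^ n ≤ K + K ^ 2 := by rcases hn with rfl | rfl <;> nlinarith
    calc ∫ s in (0:ℝ)..1, s ^ x * log (1 / s) ^ n * ν s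
        ≤ (D + K ^ n) * ∫ s in (0:ℝ)..1, s ^ x * ν s :=
          integral_rpow_mul_log_one_div_pow_mul_le hν hνi ha hm hx (hn_le n hn)
      _ ≤ (D + K + K ^ 2) * ∫ s in (0:ℝ)..1, s ^ x * ν s :=
          mul_le_mul_of_nonneg_right (by linarith) (hG x)
end

section
/- Let g be analytic on the unit disc with nonnegative Maclaurin coefficients c_n ≥ 0, and suppose Σ c_n < ∞. If sup_{k≥0} (k+1) Σ_{n≥0} (n+1)c_{n+1}/(n+k+1) < ∞, then for every f ∈ HL_1 the function T_g(f) is bounded on 𝔻 and sup_{z∈𝔻}|T_g(f)(z)| ≤ ‖f‖_{HL_1} · sup_{k≥0} ((k+1) Σ_{n≥0} (n+1)c_{n+1}/(n+k+1)). -/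
/-!
Expanding `f(tz) g'(tz) z` as a double power series in `t` and integrating termwise gives
`T_g f(z) = Σ_{k,n} a_k (n+1) c_{n+1} z^{k+n+1} / (k+n+1)`. Since `|z| < 1`, this is bounded by
the Hilbert-matrix pairing `Σ_{k,n} |a_k| (n+1) c_{n+1} / (k+n+1)`, whose `k`-th row is at most
`|a_k| M / (k+1)` by the hypothesis on `c`; summing over `k` gives `‖f‖_{HL₁} M`.
-/

open Real Complex MeasureTheory

section HilbertForm

variable {u b : ℕ → ℝ} {M : ℝ}

lemma summable_div_add_add_one (hb : ∀ n, 0 ≤ b n)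
    (hbs : Summable fun n : ℕ => b n / ((n : ℝ) + 1)) (k : ℕ) :
    Summable fun n : ℕ => b n / ((n : ℝ) + k + 1) :=
  .of_nonneg_of_le (fun n => by have := hb n; positivity)
    (fun n => div_le_div_of_nonneg_left (hb n) (by positivity) (by simp)) hbs

lemma tsum_mul_div_add_add_one_le (hu : ∀ k, 0 ≤ u k)
    (hM : ∀ k : ℕ, ((k : ℝ) + 1) * ∑' n : ℕ, b n / ((n : ℝ) + k + 1) ≤ M) (k : ℕ) :
    ∑' n : ℕ, u k * b n / ((k : ℝ) + n + 1) ≤ u k / ((k : ℝ) + 1) * M := by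
  calc ∑' n : ℕ, u k * b n / ((k : ℝ) + n + 1)
        = u k * ∑' n : ℕ, b n / ((n : ℝ) + k + 1) := by
        rw [← tsum_mul_left]
        exact tsum_congr fun n => by rw [add_comm (k : ℝ), mul_div_assoc]
    _ ≤ u k * (M / ((k : ℝ) + 1)) := by
        gcongr
        · exact hu k
        · rw [le_div_iff₀ (by positivity), mul_comm]
          exact hM k
    _ = u k / ((k : ℝ) + 1) * M := by ring

lemma summable_hilbertForm (hu : ∀ k, 0 ≤ u k) (hb : ∀ n, 0 ≤ b n)
    (hus : Summable fun k : ℕ => u k / ((k : ℝ) + 1))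
    (hbs : Summable fun n : ℕ => b n / ((n : ℝ) + 1))
    (hM : ∀ k : ℕ, ((k : ℝ) + 1) * ∑' n : ℕ, b n / ((n : ℝ) + k + 1) ≤ M) :
    Summable fun p : ℕ × ℕ => u p.1 * b p.2 / ((p.1 : ℝ) + p.2 + 1) := by
  have hnonneg : 0 ≤ fun p : ℕ × ℕ => u p.1 * b p.2 / ((p.1 : ℝ) + p.2 + 1) := fun p => by
    have := hu p.1; have := hb p.2; positivity
  have hrow (k : ℕ) : Summable fun n : ℕ => u k * b n / ((k : ℝ) + n + 1) :=
    ((summable_div_add_add_one hb hbs k).mul_left (u k)).congr fun n => by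
      rw [add_comm (n : ℝ), mul_div_assoc]
  exact (summable_prod_of_nonneg hnonneg).mpr ⟨hrow, .of_nonneg_of_le
    (fun k => tsum_nonneg fun n => hnonneg (k, n)) (tsum_mul_div_add_add_one_le hu hM)
    (hus.mul_right M)⟩

lemma tsum_hilbertForm_le (hu : ∀ k, 0 ≤ u k) (hb : ∀ n, 0 ≤ b n)
    (hus : Summable fun k : ℕ => u k / ((k : ℝ) + 1))
    (hbs : Summable fun n : ℕ => b n / ((n : ℝ) + 1))
    (hM : ∀ k : ℕ, ((k : ℝ) + 1) * ∑' n : ℕ, b n / ((n : ℝ) + k + 1) ≤ M) :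
    ∑' p : ℕ × ℕ, u p.1 * b p.2 / ((p.1 : ℝ) + p.2 + 1) ≤
      (∑' k : ℕ, u k / ((k : ℝ) + 1)) * M := by
  have hsum := summable_hilbertForm hu hb hus hbs hM
  rw [hsum.tsum_prod' fun k => hsum.prod_factor k, ← tsum_mul_right]
  exact hsum.prod.tsum_le_tsum (tsum_mul_div_add_add_one_le hu hM) (hus.mul_right M)

end HilbertForm

lemma summable_succ_mul_geometric {r : ℝ} (h0 : 0 ≤ r) (h1 : r < 1) :
    Summable fun n : ℕ => ((n : ℝ) + 1) * r ^ n := by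
  have h1' : ‖r‖ < 1 := by rwa [norm_of_nonneg h0]
  simpa [add_mul] using (summable_pow_mul_geometric_of_norm_lt_one 1 h1').add
    (summable_geometric_of_lt_one h0 h1)

section PowerSeries

variable {𝕜 : Type*} [RCLike 𝕜]

lemma norm_le_tsum_div_mul {a : ℕ → 𝕜}
    (ha : Summable fun n : ℕ => ‖a n‖ / ((n : ℝ) + 1)) (n : ℕ) :
    ‖a n‖ ≤ (∑' k : ℕ, ‖a k‖ / ((k : ℝ) + 1)) * ((n : ℝ) + 1) := by
  rw [← div_le_iff₀ (by positivity)]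
  exact ha.le_tsum n fun k _ => by positivity

lemma summable_norm_mul_pow_of_summable_div {a : ℕ → 𝕜}
    (ha : Summable fun n : ℕ => ‖a n‖ / ((n : ℝ) + 1)) {w : 𝕜} (hw : ‖w‖ < 1) :
    Summable fun n => ‖a n * w ^ n‖ := by
  refine .of_nonneg_of_le (fun _ => norm_nonneg _) (fun n => ?_)
    ((summable_succ_mul_geometric (norm_nonneg w) hw).mul_left
      (∑' k : ℕ, ‖a k‖ / ((k : ℝ) + 1)))
  rw [norm_mul, norm_pow, ← mul_assoc]
  exact mul_le_mul_of_nonneg_right (norm_le_tsum_div_mul ha n) (by positivity)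

lemma hasDerivAt_tsum_mul_pow {c : ℕ → 𝕜} {C : ℝ} (hC : ∀ n, ‖c n‖ ≤ C) {w : 𝕜}
    (hw : ‖w‖ < 1) :
    HasDerivAt (fun y => ∑' n, c n * y ^ n)
      (∑' n : ℕ, ((n : 𝕜) + 1) * c (n + 1) * w ^ n) w := by
  obtain ⟨r, hwr, hr1⟩ := exists_between hw
  have hr0 : 0 ≤ r := (norm_nonneg w).trans hwr.le
  have hu : Summable fun n : ℕ => C * (n * r ^ (n - 1)) := by
    refine .mul_left C ((summable_nat_add_iff 1).mp ?_)
    simpa using summable_succ_mul_geometric hr0 hr1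
  have hbound : ∀ n (y : 𝕜), y ∈ Metric.ball 0 r →
      ‖c n * (n * y ^ (n - 1))‖ ≤ C * (n * r ^ (n - 1)) := by
    intro n y hy
    rw [mem_ball_zero_iff] at hy
    rw [norm_mul, norm_mul, norm_pow, RCLike.norm_natCast]
    gcongr
    · exact (norm_nonneg _).trans (hC 0)
    · exact hC n
  have hw_ball : w ∈ Metric.ball (0 : 𝕜) r := mem_ball_zero_iff.mpr hwr
  have hsum_w : Summable fun n => c n * w ^ n :=
    .of_norm_bounded ((summable_geometric_of_lt_one (norm_nonneg w) hw).mul_left C) fun n => by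
      rw [norm_mul, norm_pow]
      exact mul_le_mul_of_nonneg_right (hC n) (by positivity)
  have hderiv := hasDerivAt_tsum_of_isPreconnected hu Metric.isOpen_ball
    (convex_ball (0 : 𝕜) r).isPreconnected
    (fun n y _ => (hasDerivAt_pow n y).const_mul (c n)) hbound hw_ball hsum_w hw_ball
  refine hderiv.congr_deriv ?_
  rw [(Summable.of_norm_bounded hu fun n => hbound n w hw_ball).tsum_eq_zero_add]
  simp only [CharP.cast_eq_zero, zero_mul, mul_zero, zero_add, Nat.cast_add, Nat.cast_one,
    add_tsub_cancel_right]
  exact tsum_congr fun n => by ring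

lemma tsum_mul_pow_mul_tsum_mul_pow {α β : ℕ → 𝕜} {w : 𝕜}
    (hα : Summable fun k => ‖α k * w ^ k‖) (hβ : Summable fun n => ‖β n * w ^ n‖) :
    (∑' k, α k * w ^ k) * (∑' n, β n * w ^ n) =
      ∑' p : ℕ × ℕ, α p.1 * β p.2 * w ^ (p.1 + p.2) := by
  rw [tsum_mul_tsum_of_summable_norm hα hβ]
  exact tsum_congr fun p => by rw [pow_add]; ring

lemma norm_ofReal_mul_lt_one {t : ℝ} (ht : t ∈ Set.uIcc 0 1) {z : 𝕜} (hz : ‖z‖ < 1) :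
    ‖(t : 𝕜) * z‖ < 1 := by
  rw [Set.uIcc_of_le zero_le_one] at ht
  rw [norm_mul, RCLike.norm_ofReal, abs_of_nonneg ht.1]
  nlinarith [norm_nonneg z, ht.2]

end PowerSeries

section TermwiseIntegration

variable {𝕜 : Type*} [RCLike 𝕜]

lemma integral_ofReal_pow (n : ℕ) :
    ∫ t in (0 : ℝ)..1, (t : 𝕜) ^ n = 1 / ((n : 𝕜) + 1) := by
  simp_rw [← RCLike.ofReal_pow, RCLike.intervalIntegral_ofReal, integral_pow]
  push_cast
  simp

lemma integral_norm_mul_ofReal_pow (x : 𝕜) (n : ℕ) :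
    ∫ t in Set.Ioc (0 : ℝ) 1, ‖x * (t : 𝕜) ^ n‖ = ‖x‖ / ((n : ℝ) + 1) := by
  rw [← intervalIntegral.integral_of_le zero_le_one]
  calc ∫ t in (0 : ℝ)..1, ‖x * (t : 𝕜) ^ n‖
        = ∫ t in (0 : ℝ)..1, ‖x‖ * t ^ n := by
        refine intervalIntegral.integral_congr fun t ht => ?_
        rw [Set.uIcc_of_le zero_le_one] at ht
        simp [norm_mul, norm_pow, abs_of_nonneg ht.1]
    _ = ‖x‖ / ((n : ℝ) + 1) := by simp [integral_pow, div_eq_mul_inv]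

lemma hasSum_integral_tsum_mul_pow {ι : Type*} [Countable ι] {x : ι → 𝕜} {m : ι → ℕ}
    (hx : Summable fun i => ‖x i‖ / ((m i : ℝ) + 1)) :
    HasSum (fun i => x i / ((m i : 𝕜) + 1))
      (∫ t in (0 : ℝ)..1, ∑' i, x i * (t : 𝕜) ^ m i) := by
  have hint (i : ι) : Integrable (fun t : ℝ => x i * (t : 𝕜) ^ m i)
      (volume.restrict (Set.Ioc 0 1)) :=
    (continuous_const.mul (RCLike.continuous_ofReal.pow _)).integrableOn_Ioc
  have hterm (i : ι) :
      ∫ t in Set.Ioc (0 : ℝ) 1, x i * (t : 𝕜) ^ m i = x i / ((m i : 𝕜) + 1) := by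
    rw [← intervalIntegral.integral_of_le zero_le_one, intervalIntegral.integral_const_mul,
      integral_ofReal_pow, mul_one_div]
  rw [intervalIntegral.integral_of_le zero_le_one]
  simpa only [hterm] using hasSum_integral_of_summable_integral_norm hint
    (by simpa only [integral_norm_mul_ofReal_pow] using hx)

lemma norm_integral_tsum_mul_tsum_le {α β : ℕ → 𝕜}
    (hα : Summable fun n : ℕ => ‖α n‖ / ((n : ℝ) + 1))
    (hβ : Summable fun n : ℕ => ‖β n‖ / ((n : ℝ) + 1))
    (hαβ : Summable fun p : ℕ × ℕ => ‖α p.1‖ * ‖β p.2‖ / ((p.1 : ℝ) + p.2 + 1))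
    {z : 𝕜} (hz : ‖z‖ < 1) :
    ‖∫ t in (0 : ℝ)..1,
        (∑' n, α n * ((t : 𝕜) * z) ^ n) * (∑' n, β n * ((t : 𝕜) * z) ^ n) * z‖ ≤
      ∑' p : ℕ × ℕ, ‖α p.1‖ * ‖β p.2‖ / ((p.1 : ℝ) + p.2 + 1) := by
  set x : ℕ × ℕ → 𝕜 := fun p => α p.1 * β p.2 * z ^ (p.1 + p.2 + 1)
  have hexpand : Set.EqOn
      (fun t : ℝ => (∑' n, α n * ((t : 𝕜) * z) ^ n) *
        (∑' n, β n * ((t : 𝕜) * z) ^ n) * z)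
      (fun t : ℝ => ∑' p : ℕ × ℕ, x p * (t : 𝕜) ^ (p.1 + p.2)) (Set.uIcc 0 1) := by
    intro t ht
    have hw := norm_ofReal_mul_lt_one ht hz
    simp only
    rw [tsum_mul_pow_mul_tsum_mul_pow (summable_norm_mul_pow_of_summable_div hα hw)
      (summable_norm_mul_pow_of_summable_div hβ hw), ← tsum_mul_right]
    exact tsum_congr fun p => by simp only [x]; ring
  have hxle (p : ℕ × ℕ) : ‖x p‖ / (((p.1 + p.2 : ℕ) : ℝ) + 1) ≤
      ‖α p.1‖ * ‖β p.2‖ / ((p.1 : ℝ) + p.2 + 1) := by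
    have hzpow : ‖z‖ ^ (p.1 + p.2 + 1) ≤ 1 := pow_le_one₀ (norm_nonneg _) hz.le
    simp only [x, norm_mul, norm_pow, Nat.cast_add]
    gcongr ?_ / _
    exact mul_le_of_le_one_right (by positivity) hzpow
  have hxs : Summable fun p : ℕ × ℕ => ‖x p‖ / (((p.1 + p.2 : ℕ) : ℝ) + 1) :=
    .of_nonneg_of_le (fun p => by positivity) hxle hαβ
  rw [intervalIntegral.integral_congr hexpand]
  calc _ ≤ ∑' p : ℕ × ℕ, ‖x p‖ / (((p.1 + p.2 : ℕ) : ℝ) + 1) :=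
        (hasSum_integral_tsum_mul_pow hxs).norm_le_of_bounded hxs.hasSum fun p => by
          rw [norm_div]
          norm_cast
    _ ≤ _ := hxs.tsum_le_tsum hxle hαβ

end TermwiseIntegration

/-- If `g(z) = Σ cₙ zⁿ` has nonnegative summable coefficients and
`sup_k (k+1) Σₙ (n+1)c_{n+1}/(n+k+1) ≤ M`, then `T_g` maps `HL₁` into `H^∞` with
`‖T_g f‖_{H^∞} ≤ ‖f‖_{HL₁} · M`. -/
theorem Tg_HL1_to_Hinfty (c : ℕ → ℝ) (hc : ∀ n, 0 ≤ c n) (hcs : Summable c)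
    (M : ℝ)
    (hM : ∀ k : ℕ, ((k : ℝ) + 1) *
      (∑' n : ℕ, ((n : ℝ) + 1) * c (n + 1) / ((n : ℝ) + (k : ℝ) + 1)) ≤ M)
    (a : ℕ → ℂ) (ha : Summable (fun n : ℕ => ‖a n‖ / ((n : ℝ) + 1))) :
    ∀ z : ℂ, ‖z‖ < 1 →
      ‖∫ t in (0:ℝ)..1,
          (∑' n : ℕ, a n * ((t : ℂ) * z) ^ n) *
            deriv (fun w : ℂ => ∑' n : ℕ, (c n : ℂ) * w ^ n) ((t : ℂ) * z) * z‖ ≤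
        (∑' n : ℕ, ‖a n‖ / ((n : ℝ) + 1)) * M := by
  intro z hz
  set β : ℕ → ℂ := fun n => ((n : ℂ) + 1) * c (n + 1)
  have hβ_norm (n : ℕ) : ‖β n‖ = ((n : ℝ) + 1) * c (n + 1) := by
    simp only [β, norm_mul, Complex.norm_real, Real.norm_of_nonneg (hc _)]
    norm_cast
  have hb (n : ℕ) : 0 ≤ ((n : ℝ) + 1) * c (n + 1) := mul_nonneg (by positivity) (hc _)
  have hbs : Summable fun n : ℕ => ((n : ℝ) + 1) * c (n + 1) / ((n : ℝ) + 1) :=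
    ((summable_nat_add_iff 1).mpr hcs).congr fun n =>
      (mul_div_cancel_left₀ _ (by positivity)).symm
  have hβ : Summable fun n : ℕ => ‖β n‖ / ((n : ℝ) + 1) := by
    simpa only [hβ_norm] using hbs
  have hderiv : Set.EqOn (fun t : ℝ => deriv (fun w : ℂ => ∑' n : ℕ, (c n : ℂ) * w ^ n)
      ((t : ℂ) * z)) (fun t : ℝ => ∑' n, β n * ((t : ℂ) * z) ^ n) (Set.uIcc 0 1) := by
    intro t ht
    have hC (n : ℕ) : ‖(c n : ℂ)‖ ≤ ∑' k, c k := by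
      rw [Complex.norm_real, Real.norm_of_nonneg (hc n)]
      exact hcs.le_tsum n fun k _ => hc k
    exact (hasDerivAt_tsum_mul_pow hC (norm_ofReal_mul_lt_one ht hz)).deriv
  have hαβ := summable_hilbertForm (fun k => norm_nonneg (a k)) hb ha hbs hM
  simp_rw [← hβ_norm] at hαβ
  calc _ = ‖∫ t in (0 : ℝ)..1, (∑' n, a n * ((t : ℂ) * z) ^ n) *
        (∑' n, β n * ((t : ℂ) * z) ^ n) * z‖ := by
        congr 1
        exact intervalIntegral.integral_congr fun t ht => by simp only [hderiv ht]
    _ ≤ ∑' p : ℕ × ℕ, ‖a p.1‖ * ‖β p.2‖ / ((p.1 : ℝ) + p.2 + 1) :=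
        norm_integral_tsum_mul_tsum_le ha hβ hαβ hz
    _ ≤ _ := by
        simp_rw [hβ_norm]
        exact tsum_hilbertForm_le (fun k => norm_nonneg (a k)) hb ha hbs hM
end
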